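/- Suppose the dependency relation of a CBCN is acyclic and the CBCN has Property P. Then there exists a decomposition of the index set into disjoint controlled paths: a finite collection of controlled paths that are pairwise disjoint as sets of indices and whose union is all of Fin n. -/

import Mathlib

def cbcnStep {n : ℕ} (ε : Fin n → Fin n → Bool) (I : Finset (Fin n))
    (u x : Fin n → Bool) : Fin n → Bool :=
  fun i => if i ∈ I then u i else decide (∀ j : Fin n, ε j i = true → x j = true)

def cbcnTraj {n : ℕ} (ε : Fin n → Fin n → Bool) (I : Finset (Fin n))
    (u : ℕ → Fin n → Bool) (a : Fin n → Bool) : ℕ → Fin n → Bool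
  | 0 => a
  | k + 1 => cbcnStep ε I (u k) (cbcnTraj ε I u a k)

/-- The dependency relation of the CBCN: there is an arc `j → i`
iff `i ∉ I` and `ε j i = true`. -/
def depArc {n : ℕ} (ε : Fin n → Fin n → Bool) (I : Finset (Fin n))
    (j i : Fin n) : Prop :=
  i ∉ I ∧ ε j i = true

/-- A controlled path: a nonempty list of distinct indices, starting at a
directly controlled index, and such that each subsequent index is the unique
out-neighbor of its predecessor in the dependency relation. -/
def IsControlledPath {n : ℕ} (ε : Fin n → Fin n → Bool) (I : Finset (Fin n))
    (p : List (Fin n)) : Prop :=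
  p ≠ [] ∧ p.Nodup ∧ (∀ x ∈ p.head?, x ∈ I) ∧
    ∀ (t : ℕ) (ht : t + 1 < p.length),
      depArc ε I (p.get ⟨t, Nat.lt_of_succ_lt ht⟩) (p.get ⟨t + 1, ht⟩) ∧
      ∀ k : Fin n, depArc ε I (p.get ⟨t, Nat.lt_of_succ_lt ht⟩) k → k = p.get ⟨t + 1, ht⟩

/-- A decomposition of the index set into disjoint controlled paths. -/
def HasControlledPathDecomposition {n : ℕ} (ε : Fin n → Fin n → Bool)
    (I : Finset (Fin n)) : Prop :=
  ∃ C : Finset (List (Fin n)),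
    (∀ p ∈ C, IsControlledPath ε I p) ∧
    (∀ p ∈ C, ∀ q ∈ C, p ≠ q → ∀ x : Fin n, x ∈ p → x ∉ q) ∧
    (∀ i : Fin n, ∃ p ∈ C, i ∈ p)

/-!
By Property P every index outside `I` is the only out-neighbour of some channel. Choosing one
such channel as its predecessor gives every index at most one predecessor (none exactly on `I`)
and, since the out-neighbour of a channel is unique, at most one successor. Acyclicity makes the
chains of predecessors finite, and the maximal chains, read from an index of `I` to an index
without successor, are controlled paths that partition the indices.
-/

open Relation

section ChainsOfPredecessors

variable {α : Type*}

def Precedes (prev : α → Option α) (a b : α) : Prop := prev b = some a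

variable (prev : α → Option α) (hwf : WellFounded (Precedes prev))

noncomputable def chainTo : α → List α :=
  hwf.fix fun i rec =>
    match h : prev i with
    | none => [i]
    | some j => rec j h ++ [i]

variable {prev}

theorem chainTo_of_eq_none {i : α} (h : prev i = none) : chainTo prev hwf i = [i] := by
  rw [chainTo, WellFounded.fix_eq]
  split <;> simp_all

theorem chainTo_of_eq_some {i j : α} (h : prev i = some j) :
    chainTo prev hwf i = chainTo prev hwf j ++ [i] := by
  rw [chainTo, WellFounded.fix_eq]
  split
  · simp_all
  · next j' hj' =>
    obtain rfl : j' = j := Option.some.inj (hj'.symm.trans h)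
    rfl

theorem chainTo_ne_nil (i : α) : chainTo prev hwf i ≠ [] := by
  cases h : prev i with
  | none => simp [chainTo_of_eq_none hwf h]
  | some j => simp [chainTo_of_eq_some hwf h]

theorem mem_chainTo_iff {a i : α} : a ∈ chainTo prev hwf i ↔ ReflTransGen (Precedes prev) a i := by
  induction i using hwf.induction with
  | _ i ih =>
    cases h : prev i with
    | none =>
      rw [chainTo_of_eq_none hwf h, List.mem_singleton]
      refine ⟨fun ha => ha ▸ .refl, fun ha => ?_⟩
      rcases ha.cases_tail with rfl | ⟨j, -, hj⟩
      · rfl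
      · exact absurd (h.symm.trans hj) nofun
    | some j =>
      rw [chainTo_of_eq_some hwf h, List.mem_append, ih j h, List.mem_singleton]
      refine ⟨fun ha => ha.elim (·.tail h) (· ▸ .refl), fun ha => ?_⟩
      rcases ha.cases_tail with rfl | ⟨k, hk, hki⟩
      · exact .inr rfl
      · obtain rfl : k = j := Option.some.inj (hki.symm.trans h)
        exact .inl hk

theorem nodup_chainTo (i : α) : (chainTo prev hwf i).Nodup := by
  induction i using hwf.induction with
  | _ i ih =>
    cases h : prev i with
    | none => simp [chainTo_of_eq_none hwf h]
    | some j =>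
      rw [chainTo_of_eq_some hwf h, List.nodup_append]
      refine ⟨ih j h, List.nodup_singleton i, ?_⟩
      rintro a ha b hb rfl
      rw [List.mem_singleton] at hb
      subst hb
      exact hwf.transGen.irrefl.irrefl a (TransGen.tail' ((mem_chainTo_iff hwf).1 ha) h)

theorem getLast?_chainTo (i : α) : (chainTo prev hwf i).getLast? = some i := by
  cases h : prev i with
  | none => simp [chainTo_of_eq_none hwf h]
  | some j => simp [chainTo_of_eq_some hwf h]

theorem isChain_chainTo (i : α) : (chainTo prev hwf i).IsChain (Precedes prev) := by
  induction i using hwf.induction with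
  | _ i ih =>
    cases h : prev i with
    | none => simp [chainTo_of_eq_none hwf h]
    | some j =>
      rw [chainTo_of_eq_some hwf h, List.isChain_append, getLast?_chainTo]
      exact ⟨ih j h, .singleton i, by simpa [Precedes] using h⟩

theorem eq_none_of_mem_head?_chainTo (i : α) :
    ∀ a ∈ (chainTo prev hwf i).head?, prev a = none := by
  induction i using hwf.induction with
  | _ i ih =>
    cases h : prev i with
    | none => simpa [chainTo_of_eq_none hwf h] using h
    | some j =>
      rw [chainTo_of_eq_some hwf h, List.head?_append_of_ne_nil _ (chainTo_ne_nil hwf j)]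
      exact ih j h

end ChainsOfPredecessors

section PathPartition

variable {α : Type*}

theorem wellFounded_of_not_transGen_self [Finite α] {r : α → α → Prop}
    (h : ∀ a, ¬ TransGen r a a) : WellFounded r :=
  have : IsTrans α (TransGen r) := ⟨fun _ _ _ => TransGen.trans⟩
  have : Std.Irrefl (TransGen r) := ⟨h⟩
  (Finite.wellFounded_of_trans_of_irrefl (TransGen r)).mono fun _ _ => TransGen.single

theorem exists_cycle_of_transGen_self {r : α → α → Prop} {a : α}
    (h : TransGen r a a) : ∃ (k : ℕ) (c : Fin (k + 1) → α), ∀ t, r (c t) (c (t + 1)) := by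
  obtain ⟨b, hab, hba⟩ := TransGen.head'_iff.1 h
  obtain ⟨l, hchain, hlast⟩ := List.exists_isChain_cons_of_relationReflTransGen hba
  refine ⟨l.length, (b :: l).get, fun t => ?_⟩
  by_cases ht : t = Fin.last l.length
  · subst ht
    rw [Fin.last_add_one]
    have hget : (b :: l).get (Fin.last l.length) = a := by
      rw [← hlast, List.getLast_eq_getElem]
      rfl
    rw [hget]
    exact hab
  · have htlt : (t : ℕ) < l.length := Fin.val_lt_last ht
    have hval : ((t + 1 : Fin (l.length + 1)) : ℕ) = t + 1 := by simp [Fin.val_add_one, ht]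
    simp only [List.get_eq_getElem, hval]
    exact hchain.getElem t (by simpa using htlt)

theorem exists_partition_into_chainTo [Fintype α] {prev : α → Option α}
    (hwf : WellFounded (Precedes prev)) (hsucc : Relator.RightUnique (Precedes prev)) :
    ∃ C : Finset (List α),
      (∀ p ∈ C, p ≠ [] ∧ p.Nodup ∧ (∀ a ∈ p.head?, prev a = none) ∧
        p.IsChain (Precedes prev)) ∧
      (∀ p ∈ C, ∀ q ∈ C, p ≠ q → ∀ a ∈ p, a ∉ q) ∧
      ∀ a, ∃ p ∈ C, a ∈ p := by
  classical
  have hwf' : WellFounded (Function.swap (Precedes prev)) :=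
    wellFounded_of_not_transGen_self fun a ha =>
      hwf.transGen.irrefl.irrefl a (transGen_swap.1 ha)
  let IsLast (m : α) : Prop := ∀ b, ¬ Precedes prev m b
  have eq_of_isLast {m c : α} (hm : IsLast m) (hmc : ReflTransGen (Precedes prev) m c) : m = c :=
    (hmc.cases_head).resolve_right fun ⟨b, hb, _⟩ => hm b hb
  refine ⟨(Finset.univ.filter IsLast).image (chainTo prev hwf), ?_, ?_, fun a => ?_⟩
  · simp only [Finset.mem_image, Finset.mem_filter, Finset.mem_univ, true_and]
    rintro _ ⟨m, -, rfl⟩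
    exact ⟨chainTo_ne_nil hwf m, nodup_chainTo hwf m, eq_none_of_mem_head?_chainTo hwf m,
      isChain_chainTo hwf m⟩
  · simp only [Finset.mem_image, Finset.mem_filter, Finset.mem_univ, true_and]
    rintro _ ⟨m₁, hm₁, rfl⟩ _ ⟨m₂, hm₂, rfl⟩ hne a ha₁ ha₂
    rw [mem_chainTo_iff] at ha₁ ha₂
    refine hne (congrArg _ ?_)
    rcases ReflTransGen.total_of_right_unique hsucc ha₁ ha₂ with h | h
    · exact eq_of_isLast hm₁ h
    · exact (eq_of_isLast hm₂ h).symm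
  · obtain ⟨m, ham, hm⟩ := hwf'.has_min {m | ReflTransGen (Precedes prev) a m} ⟨a, .refl⟩
    refine ⟨chainTo prev hwf m, ?_, (mem_chainTo_iff hwf).2 ham⟩
    simp only [Finset.mem_image, Finset.mem_filter, Finset.mem_univ, true_and]
    exact ⟨m, fun b hb => hm b (ham.tail hb) hb, rfl⟩

open Classical in
noncomputable def pickPred (r : α → α → Prop) (b : α) : Option α :=
  if h : ∃ a, r a b then some h.choose else none

theorem rel_of_precedes_pickPred {r : α → α → Prop} {a b : α} (h : Precedes (pickPred r) a b) :
    r a b := by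
  unfold Precedes pickPred at h
  split at h
  · next hb => exact Option.some.inj h ▸ hb.choose_spec
  · exact absurd h nofun

theorem pickPred_eq_none {r : α → α → Prop} {b : α} (h : pickPred r b = none) (a : α) :
    ¬ r a b := by
  unfold pickPred at h
  split at h
  · exact absurd h nofun
  · next hb => exact fun hab => hb ⟨a, hab⟩

theorem exists_partition_into_chains [Fintype α] {r : α → α → Prop} (hr : Relator.RightUnique r)
    (hacyc : ∀ a, ¬ TransGen r a a) :
    ∃ C : Finset (List α),
      (∀ p ∈ C, p ≠ [] ∧ p.Nodup ∧ (∀ a ∈ p.head?, ∀ b, ¬ r b a) ∧ p.IsChain r) ∧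
      (∀ p ∈ C, ∀ q ∈ C, p ≠ q → ∀ a ∈ p, a ∉ q) ∧
      ∀ a, ∃ p ∈ C, a ∈ p := by
  have hle : Precedes (pickPred r) ≤ r := fun _ _ => rel_of_precedes_pickPred
  have hwf : WellFounded (Precedes (pickPred r)) :=
    wellFounded_of_not_transGen_self fun a ha => hacyc a (TransGen.mono hle a a ha)
  obtain ⟨C, hC, hdisj, hcover⟩ :=
    exists_partition_into_chainTo hwf fun _ _ _ hb hc => hr (hle _ _ hb) (hle _ _ hc)
  refine ⟨C, fun p hp => ?_, hdisj, hcover⟩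
  obtain ⟨hne, hnd, hhead, hchain⟩ := hC p hp
  exact ⟨hne, hnd, fun a ha => pickPred_eq_none (hhead a ha), hchain.imp hle⟩

end PathPartition

section CBCN

variable {n : ℕ} (ε : Fin n → Fin n → Bool) (I : Finset (Fin n))

/-- `j → i` is the only arc out of `j`: the steps of a controlled path. -/
def SoleArc (j i : Fin n) : Prop := depArc ε I j i ∧ ∀ k, depArc ε I j k → k = i

def IsChannel (j : Fin n) : Prop :=
  ∃ m, m ≠ j ∧ depArc ε I j m ∧ ∀ k, depArc ε I j k → k = m

def HasPropertyP : Prop := ∀ i, i ∈ I ∨ ∃ j, IsChannel ε I j ∧ depArc ε I j i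

variable {ε I}

theorem rightUnique_soleArc : Relator.RightUnique (SoleArc ε I) :=
  fun _ b _ hb hc => hc.2 b hb.1

theorem HasPropertyP.mem_of_forall_not_soleArc (hP : HasPropertyP ε I) {i : Fin n}
    (h : ∀ j, ¬ SoleArc ε I j i) : i ∈ I :=
  (hP i).resolve_right fun ⟨j, ⟨_, _, _, hm⟩, hji⟩ =>
    h j ⟨hji, fun k hk => (hm k hk).trans (hm i hji).symm⟩

theorem isControlledPath_of_isChain {p : List (Fin n)} (hne : p ≠ []) (hnd : p.Nodup)
    (hhead : ∀ i ∈ p.head?, i ∈ I) (hchain : p.IsChain (SoleArc ε I)) :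
    IsControlledPath ε I p :=
  ⟨hne, hnd, hhead, fun t ht => hchain.getElem t ht⟩

end CBCN

/-- If the dependency relation of a CBCN is acyclic and the CBCN has Property
P, then its index set decomposes into disjoint controlled paths. -/
theorem acyclic_propertyP_decomposition {n : ℕ} (ε : Fin n → Fin n → Bool)
    (I : Finset (Fin n))
    (hacyc : ¬ ∃ (k : ℕ) (c : Fin (k + 1) → Fin n),
        ∀ t : Fin (k + 1), depArc ε I (c t) (c (t + 1)))
    (hP : ∀ i : Fin n, i ∈ I ∨ ∃ j : Fin n,
        (∃ m : Fin n, m ≠ j ∧ depArc ε I j m ∧ ∀ k : Fin n, depArc ε I j k → k = m) ∧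
        depArc ε I j i) :
    HasControlledPathDecomposition ε I := by
  have hacyc' : ∀ i, ¬ TransGen (SoleArc ε I) i i := fun i hi =>
    hacyc (exists_cycle_of_transGen_self (TransGen.mono (fun _ _ => And.left) i i hi))
  obtain ⟨C, hC, hdisj, hcover⟩ := exists_partition_into_chains rightUnique_soleArc hacyc'
  refine ⟨C, fun p hp => ?_, hdisj, hcover⟩
  obtain ⟨hne, hnd, hhead, hchain⟩ := hC p hp
  exact isControlledPath_of_isChain hne hnd
    (fun i hi => HasPropertyP.mem_of_forall_not_soleArc hP (hhead i hi)) hchain
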